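/- arXiv:2509.17415 — 8 statements merged into one kernel-verified Lean document; each statement's English description precedes it below -/
import Mathlib

section
/- Let F ⊆ ℝ² be a nonempty compact set. Suppose 0 < a < 1/√2 and θ₀, θ₁ ∈ ℝ are such that F ⊆ H(a,θ₀), F ⊆ H(a,θ₁), and a is minimal among enclosing horocycles, i.e. for all a' with 0 < a' < 1 and all θ' ∈ ℝ, if F ⊆ H(a',θ') then a ≤ a'. Then H(a,θ₀) = H(a,θ₁) (the minimal enclosing horocycle is unique). -/
/-- Rotation of the plane `ℝ × ℝ` about the origin by angle `θ`. -/
noncomputable def planeRot (θ : ℝ) (p : ℝ × ℝ) : ℝ × ℝ :=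
  (p.1 * Real.cos θ - p.2 * Real.sin θ, p.1 * Real.sin θ + p.2 * Real.cos θ)

/-- The horocycle region `H(a,θ)`: the image under the rotation about the origin by
angle `θ` of the closed elliptical region `{(x,y) : a²x² + (y − (1 − a²))² ≤ a⁴}`. -/
noncomputable def horoRegion (a θ : ℝ) : Set (ℝ × ℝ) :=
  planeRot θ '' {p | a ^ 2 * p.1 ^ 2 + (p.2 - (1 - a ^ 2)) ^ 2 ≤ a ^ 4}

/-! In the Cayley–Klein model the horoball of size `a` tangent to the unit sphere at `u` is
`{p | 1 - ⟪p, u⟫ ≤ k √(1 - ‖p‖²)}` with slope `k = a / √(1 - a²)`, a condition affine in `u`.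
If a set lies in the horoballs of size `a` at two tangent points `u ≠ v`, adding the two
inequalities and normalising `u + v` puts it in the horoball at `(u + v) / ‖u + v‖` of slope
`(2k - 2 + ‖u + v‖) / ‖u + v‖`, which is smaller than `k` because `k < 1` (that is, `a < 1/√2`)
and `‖u + v‖ < 2`; when `v = -u` the two horoballs are already disjoint. So two distinct
minimal enclosing horocycles would produce a strictly smaller enclosing one. -/

open scoped RealInnerProductSpace
open Set

section Horoball

variable {E : Type*} [NormedAddCommGroup E] [InnerProductSpace ℝ E]

def horoball (a : ℝ) (u : E) : Set E :=
  {p | (1 - a ^ 2) * (1 - ⟪p, u⟫) ^ 2 ≤ a ^ 2 * (1 - ‖p‖ ^ 2)}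

noncomputable def horoSlope (a : ℝ) : ℝ := a / √(1 - a ^ 2)

lemma horoSlope_pos {a : ℝ} (ha0 : 0 < a) (ha1 : a < 1) : 0 < horoSlope a :=
  div_pos ha0 (Real.sqrt_pos.2 (by nlinarith))

lemma horoSlope_sq {a : ℝ} (ha1 : a ^ 2 < 1) : horoSlope a ^ 2 = a ^ 2 / (1 - a ^ 2) := by
  rw [horoSlope, div_pow, Real.sq_sqrt (by linarith)]

lemma horoSlope_lt_one {a : ℝ} (ha0 : 0 ≤ a) (ha : 2 * a ^ 2 < 1) : horoSlope a < 1 := by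
  rw [horoSlope, div_lt_one (Real.sqrt_pos.2 (by linarith)), Real.lt_sqrt ha0]
  linarith

lemma horoSlope_strictMonoOn : StrictMonoOn horoSlope (Ico 0 1) := by
  intro a ⟨ha0, ha1⟩ b ⟨_, hb1⟩ hab
  have hb : 0 < √(1 - b ^ 2) := Real.sqrt_pos.2 (by nlinarith)
  calc a / √(1 - a ^ 2) ≤ a / √(1 - b ^ 2) :=
        div_le_div_of_nonneg_left ha0 hb (Real.sqrt_le_sqrt (by nlinarith))
    _ < b / √(1 - b ^ 2) := div_lt_div_of_pos_right hab hb

lemma exists_horoSlope_eq {k : ℝ} (hk : 0 < k) : ∃ a, 0 < a ∧ a < 1 ∧ horoSlope a = k := by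
  have hs : 0 < √(1 + k ^ 2) := Real.sqrt_pos.2 (by positivity)
  have hs2 : √(1 + k ^ 2) ^ 2 = 1 + k ^ 2 := Real.sq_sqrt (by positivity)
  have hlt : k < √(1 + k ^ 2) := (Real.lt_sqrt hk.le).2 (by linarith)
  refine ⟨k / √(1 + k ^ 2), div_pos hk hs, (div_lt_one hs).2 hlt, ?_⟩
  have h1 : 1 - (k / √(1 + k ^ 2)) ^ 2 = (1 / √(1 + k ^ 2)) ^ 2 := by
    field_simp
    linarith
  rw [horoSlope, h1, Real.sqrt_sq (by positivity)]
  field_simp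

lemma inner_le_one_of_norm_le_one {p u : E} (hp : ‖p‖ ≤ 1) (hu : ‖u‖ = 1) : ⟪p, u⟫ ≤ 1 :=
  (real_inner_le_norm p u).trans (by rw [hu, mul_one]; exact hp)

lemma norm_le_one_of_mem_horoball {a : ℝ} {u p : E} (ha0 : 0 < a) (ha1 : a ≤ 1)
    (hp : p ∈ horoball a u) : ‖p‖ ≤ 1 := by
  have hD : 0 ≤ 1 - ‖p‖ ^ 2 := by
    have : 0 ≤ (1 - a ^ 2) * (1 - ⟪p, u⟫) ^ 2 :=
      mul_nonneg (by nlinarith) (sq_nonneg _)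
    exact nonneg_of_mul_nonneg_right (this.trans hp) (by positivity)
  nlinarith [norm_nonneg p]

lemma mem_horoball_iff_of_norm_le_one {a : ℝ} {u p : E} (ha0 : 0 < a) (ha1 : a < 1)
    (hu : ‖u‖ = 1) (hp : ‖p‖ ≤ 1) :
    p ∈ horoball a u ↔ 1 - ⟪p, u⟫ ≤ horoSlope a * √(1 - ‖p‖ ^ 2) := by
  show (1 - a ^ 2) * (1 - ⟪p, u⟫) ^ 2 ≤ a ^ 2 * (1 - ‖p‖ ^ 2) ↔ _
  have hA : 0 ≤ 1 - ⟪p, u⟫ := sub_nonneg.2 (inner_le_one_of_norm_le_one hp hu)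
  have hD : 0 ≤ 1 - ‖p‖ ^ 2 := by nlinarith [norm_nonneg p]
  have hc : 0 < 1 - a ^ 2 := by nlinarith
  rw [← pow_le_pow_iff_left₀ hA (mul_nonneg (horoSlope_pos ha0 ha1).le (Real.sqrt_nonneg _))
    two_ne_zero, mul_pow, Real.sq_sqrt hD, horoSlope_sq (by nlinarith), div_mul_eq_mul_div,
    le_div_iff₀ hc, mul_comm]

lemma mem_horoball_iff {a : ℝ} {u p : E} (ha0 : 0 < a) (ha1 : a < 1) (hu : ‖u‖ = 1) :
    p ∈ horoball a u ↔ ‖p‖ ≤ 1 ∧ 1 - ⟪p, u⟫ ≤ horoSlope a * √(1 - ‖p‖ ^ 2) := by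
  constructor
  · intro h
    have hp := norm_le_one_of_mem_horoball ha0 ha1.le h
    exact ⟨hp, (mem_horoball_iff_of_norm_le_one ha0 ha1 hu hp).1 h⟩
  · rintro ⟨hp, h⟩
    exact (mem_horoball_iff_of_norm_le_one ha0 ha1 hu hp).2 h

lemma horoball_inter_horoball_neg_eq_empty {a : ℝ} {u : E} (ha0 : 0 < a) (ha : 2 * a ^ 2 < 1)
    (hu : ‖u‖ = 1) : horoball a u ∩ horoball a (-u) = ∅ := by
  have ha1 : a < 1 := by nlinarith
  have hk0 := horoSlope_pos ha0 ha1
  have hk1 := horoSlope_lt_one ha0.le ha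
  refine eq_empty_of_forall_notMem fun p ⟨hpu, hpv⟩ ↦ ?_
  rw [mem_horoball_iff ha0 ha1 hu] at hpu
  rw [mem_horoball_iff ha0 ha1 (by rwa [norm_neg]), inner_neg_right] at hpv
  have hx : √(1 - ‖p‖ ^ 2) ≤ 1 := Real.sqrt_le_one.2 (by nlinarith [norm_nonneg p])
  linarith [mul_le_of_le_one_right hk0.le hx]

lemma norm_add_lt_two_of_ne {u v : E} (hu : ‖u‖ = 1) (hv : ‖v‖ = 1) (huv : u ≠ v) :
    ‖u + v‖ < 2 := by
  have h := parallelogram_law_with_norm ℝ u v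
  have : 0 < ‖u - v‖ := norm_pos_iff.2 (sub_ne_zero.2 huv)
  nlinarith [norm_nonneg (u + v)]

lemma one_sub_inner_normalize_add_le {k x : ℝ} {p u v : E} (hs0 : 0 < ‖u + v‖)
    (hs2 : ‖u + v‖ ≤ 2) (hx : x ≤ 1) (hpu : 1 - ⟪p, u⟫ ≤ k * x) (hpv : 1 - ⟪p, v⟫ ≤ k * x) :
    1 - ⟪p, ‖u + v‖⁻¹ • (u + v)⟫ ≤ (2 * k - 2 + ‖u + v‖) / ‖u + v‖ * x := by
  set s := ‖u + v‖
  have h : s * (1 - ⟪p, s⁻¹ • (u + v)⟫) = (1 - ⟪p, u⟫) + (1 - ⟪p, v⟫) - (2 - s) := by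
    rw [real_inner_smul_right, inner_add_right]
    field_simp
    ring
  rw [div_mul_eq_mul_div, le_div_iff₀ hs0, mul_comm, h]
  nlinarith

lemma exists_slope_lt_of_ne {k : ℝ} {u v : E} (hk0 : 0 < k) (hk1 : k < 1) (hu : ‖u‖ = 1)
    (hv : ‖v‖ = 1) (huv : u ≠ v) (hneg : u + v ≠ 0) :
    ∃ k', 0 < k' ∧ k' < k ∧ ∃ w : E, ‖w‖ = 1 ∧ ∀ (p : E) (x : ℝ), x ∈ Icc 0 1 →
      1 - ⟪p, u⟫ ≤ k * x → 1 - ⟪p, v⟫ ≤ k * x → 1 - ⟪p, w⟫ ≤ k' * x := by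
  set s := ‖u + v‖
  have hs0 : 0 < s := norm_pos_iff.2 hneg
  have hs2 : s < 2 := norm_add_lt_two_of_ne hu hv huv
  have hlt : (2 * k - 2 + s) / s < k := by
    rw [div_lt_iff₀ hs0]
    nlinarith
  refine ⟨max ((2 * k - 2 + s) / s) (k / 2), by positivity, max_lt hlt (by linarith),
    s⁻¹ • (u + v), norm_smul_inv_norm hneg, fun p x ⟨hx0, hx1⟩ hpu hpv ↦ ?_⟩
  calc 1 - ⟪p, s⁻¹ • (u + v)⟫ ≤ (2 * k - 2 + s) / s * x :=
        one_sub_inner_normalize_add_le hs0 hs2.le hx1 hpu hpv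
    _ ≤ max ((2 * k - 2 + s) / s) (k / 2) * x :=
        mul_le_mul_of_nonneg_right (le_max_left _ _) hx0

theorem exists_smaller_horoball_superset_inter {a : ℝ} {u v : E} (ha0 : 0 < a) (ha : 2 * a ^ 2 < 1)
    (hu : ‖u‖ = 1) (hv : ‖v‖ = 1) (huv : u ≠ v) :
    ∃ a' w, 0 < a' ∧ a' < a ∧ ‖w‖ = 1 ∧ horoball a u ∩ horoball a v ⊆ horoball a' w := by
  have ha1 : a < 1 := by nlinarith
  by_cases hneg : v = -u
  · subst hneg
    refine ⟨a / 2, u, by positivity, by linarith, hu, ?_⟩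
    rw [horoball_inter_horoball_neg_eq_empty ha0 ha hu]
    exact empty_subset _
  obtain ⟨k', hk'0, hk'k, w, hw, hbound⟩ :=
    exists_slope_lt_of_ne (horoSlope_pos ha0 ha1) (horoSlope_lt_one ha0.le ha) hu hv huv
      fun h ↦ hneg (eq_neg_of_add_eq_zero_right h)
  obtain ⟨a', ha'0, ha'1, rfl⟩ := exists_horoSlope_eq hk'0
  refine ⟨a', w, ha'0, (horoSlope_strictMonoOn.lt_iff_lt ⟨ha'0.le, ha'1⟩ ⟨ha0.le, ha1⟩).1 hk'k,
    hw, ?_⟩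
  rintro p ⟨hpu, hpv⟩
  rw [mem_horoball_iff ha0 ha1 hu] at hpu
  rw [mem_horoball_iff ha0 ha1 hv] at hpv
  rw [mem_horoball_iff ha'0 ha'1 hw]
  exact ⟨hpu.1, hbound p _ ⟨Real.sqrt_nonneg _, Real.sqrt_le_one.2 (by nlinarith)⟩ hpu.2 hpv.2⟩

end Horoball

open Complex

lemma planeRot_neg_planeRot (θ : ℝ) (p : ℝ × ℝ) : planeRot (-θ) (planeRot θ p) = p := by
  have h := Real.sin_sq_add_cos_sq θ
  ext <;> simp only [planeRot, Real.sin_neg, Real.cos_neg]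
  · linear_combination p.1 * h
  · linear_combination p.2 * h

lemma planeRot_planeRot_neg (θ : ℝ) (p : ℝ × ℝ) : planeRot θ (planeRot (-θ) p) = p := by
  simpa using planeRot_neg_planeRot (-θ) p

/-- In `ℂ`, the tangent point `planeRot θ (0, 1)` of `H(a,θ)` is `I * exp (θ * I)`. -/
lemma horoRegion_eq_preimage_horoball (a θ : ℝ) :
    horoRegion a θ = equivRealProd.symm ⁻¹' horoball a (I * exp (θ * I)) := by
  rw [horoRegion,
    image_eq_preimage_of_inverse (planeRot_neg_planeRot θ) (planeRot_planeRot_neg θ)]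
  ext p
  simp only [mem_preimage, mem_ofPred_eq, horoball, Complex.inner, Complex.sq_norm, planeRot,
    Real.cos_neg, Real.sin_neg, mul_neg, sub_neg_eq_add, equivRealProd_symm_apply, map_add,
    conj_ofReal, map_mul, conj_I, mul_re, I_re, exp_ofReal_mul_I_re, zero_mul, I_im,
    exp_ofReal_mul_I_im, one_mul, zero_sub, add_re, ofReal_re, neg_re, mul_zero, ofReal_im,
    mul_one, sub_self, neg_zero, add_zero, neg_mul, mul_im, zero_add, add_im, neg_im, normSq_apply]
  rw [← sub_nonpos, ← sub_nonpos (a := (1 - a ^ 2) * _)]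
  congr! 1
  linear_combination a ^ 2 * (p.1 ^ 2 + p.2 ^ 2) * Real.sin_sq_add_cos_sq θ

lemma norm_I_mul_exp (θ : ℝ) : ‖I * exp (θ * I)‖ = 1 := by
  rw [norm_mul, norm_I, norm_exp_ofReal_mul_I, one_mul]

lemma exists_I_mul_exp_eq {w : ℂ} (hw : ‖w‖ = 1) : ∃ θ : ℝ, I * exp (θ * I) = w := by
  refine ⟨arg (-I * w), ?_⟩
  have h := norm_mul_exp_arg_mul_I (-I * w)
  rw [norm_mul, norm_neg, norm_I, hw, one_mul, ofReal_one, one_mul] at h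
  rw [h, ← mul_assoc, mul_neg, I_mul_I, neg_neg, one_mul]

theorem minimal_enclosing_horocycle_unique_general
    (F : Set (ℝ × ℝ))
    (a : ℝ) (ha0 : 0 < a) (ha : a < 1 / Real.sqrt 2)
    (θ₀ θ₁ : ℝ)
    (h₀ : F ⊆ horoRegion a θ₀) (h₁ : F ⊆ horoRegion a θ₁)
    (hmin : ∀ a' θ' : ℝ, 0 < a' → a' < 1 → F ⊆ horoRegion a' θ' → a ≤ a') :
    horoRegion a θ₀ = horoRegion a θ₁ := by
  simp only [horoRegion_eq_preimage_horoball] at h₀ h₁ hmin ⊢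
  by_cases htangent : I * exp (θ₀ * I) = I * exp (θ₁ * I)
  · rw [htangent]
  have ha2 : 2 * a ^ 2 < 1 := by
    rw [one_div, ← Real.sqrt_inv, Real.lt_sqrt ha0.le] at ha
    linarith
  obtain ⟨a', w, ha'0, ha'a, hw, hsub⟩ :=
    exists_smaller_horoball_superset_inter ha0 ha2 (norm_I_mul_exp θ₀) (norm_I_mul_exp θ₁) htangent
  obtain ⟨θ, rfl⟩ := exists_I_mul_exp_eq hw
  have hF : F ⊆ equivRealProd.symm ⁻¹' horoball a' (I * exp (θ * I)) :=
    fun p hp ↦ hsub ⟨h₀ hp, h₁ hp⟩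
  exact absurd (hmin a' θ ha'0 (by nlinarith) hF) (not_le.2 ha'a)

/-- A compact set that can be enclosed by a horocycle of size `a < 1/√2`, where `a` is
minimal among the sizes of all enclosing horocycles, has a unique minimal enclosing
horocycle. -/
theorem minimal_enclosing_horocycle_unique
    (F : Set (ℝ × ℝ)) (hne : F.Nonempty) (hF : IsCompact F)
    (a : ℝ) (ha0 : 0 < a) (ha : a < 1 / Real.sqrt 2)
    (θ₀ θ₁ : ℝ)
    (h₀ : F ⊆ horoRegion a θ₀) (h₁ : F ⊆ horoRegion a θ₁)
    (hmin : ∀ a' θ' : ℝ, 0 < a' → a' < 1 → F ⊆ horoRegion a' θ' → a ≤ a') :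
    horoRegion a θ₀ = horoRegion a θ₁ :=
  minimal_enclosing_horocycle_unique_general F a ha0 ha θ₀ θ₁ h₀ h₁ hmin
end

section
/- Let a and ω be real numbers with 0 < a < 1/√2, 0 < ω < π/2, and 2a² − a²·cos²ω − sin²ω > 0. Define ℓ = (cos ω − a²·cos ω − a·√(2a² − a²·cos²ω − sin²ω)) / (a²·sin²ω + cos²ω). Then 2a² + ℓ − 1 > 0. -/
/-!
Write `c = cos ω`, `s = sin ω`. Intersecting the horocycle rotated by `ω` with the `y`-axis gives
the quadratic `(a²s² + c²) y² − 2c(1 − a²) y + (1 − 2a²)`, whose discriminant is `a²` times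
the quantity under the square root; `ℓ` is its smaller root. The point `1 − 2a²` lies to the
left of the vertex, and the quadratic is positive there, where it equals
`(1 − 2a²)(1 − a²)(1 − c)(2 − (1 − 2a²)(1 + c))`. Hence `1 − 2a² < ℓ`.
-/

/-- For `s ≥ 0`, `(B - s) / D` is the smaller root of `D y² − 2B y + C`. -/
theorem lt_lower_root_of_quadratic_pos {D B C s x : ℝ} (hD : 0 < D)
    (hdisc : s ^ 2 = B ^ 2 - D * C) (hx : D * x < B)
    (hpx : 0 < D * x ^ 2 - 2 * B * x + C) : x < (B - s) / D := by
  have hsq : s ^ 2 < (B - D * x) ^ 2 := by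
    have hexpand : (B - D * x) ^ 2 = s ^ 2 + D * (D * x ^ 2 - 2 * B * x + C) := by
      rw [hdisc]; ring
    linarith [mul_pos hD hpx]
  have hroot : s < B - D * x := lt_of_pow_lt_pow_left₀ 2 (by linarith) hsq
  rw [lt_div_iff₀ hD]
  linarith

theorem one_sub_two_mul_sq_lt_lower_intersection {a c sn : ℝ} (hcs : sn ^ 2 + c ^ 2 = 1)
    (ha : a ^ 2 < 1 / 2) (hc0 : 0 < c) (hc1 : c < 1)
    (hq : 0 < 2 * a ^ 2 - a ^ 2 * c ^ 2 - sn ^ 2) :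
    1 - 2 * a ^ 2 <
      (c - a ^ 2 * c - a * Real.sqrt (2 * a ^ 2 - a ^ 2 * c ^ 2 - sn ^ 2)) /
        (a ^ 2 * sn ^ 2 + c ^ 2) := by
  have hsn : sn ^ 2 = 1 - c ^ 2 := by linarith
  have hvertex : 1 - 2 * a ^ 2 < (1 - a ^ 2) * c := by nlinarith
  refine lt_lower_root_of_quadratic_pos (C := 1 - 2 * a ^ 2) (by positivity) ?_ ?_ ?_
  · rw [mul_pow, Real.sq_sqrt hq.le]
    linear_combination (-2 * a ^ 4) * hcs
  · rw [hsn]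
    nlinarith
  · have heval : (a ^ 2 * sn ^ 2 + c ^ 2) * (1 - 2 * a ^ 2) ^ 2
        - 2 * (c - a ^ 2 * c) * (1 - 2 * a ^ 2) + (1 - 2 * a ^ 2) =
        (1 - 2 * a ^ 2) * (1 - a ^ 2) * (1 - c) * (2 - (1 - 2 * a ^ 2) * (1 + c)) := by
      rw [hsn]; ring
    rw [heval]
    have h₁ : 0 < 1 - 2 * a ^ 2 := by linarith
    have h₂ : 0 < 1 - a ^ 2 := by linarith
    have h₃ : 0 < 1 - c := by linarith
    have h₄ : 0 < 2 - (1 - 2 * a ^ 2) * (1 + c) := by nlinarith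
    positivity

/-- The horocycle through the lower intersection point `L = (0, ℓ)` of two horocycles of
size `a < 1/√2` is strictly smaller: `2a² + ℓ − 1 > 0`. -/
theorem lower_intersection_size_ineq
    (a ω : ℝ) (ha0 : 0 < a) (ha : a < 1 / Real.sqrt 2)
    (hω0 : 0 < ω) (hω : ω < Real.pi / 2)
    (hq : 0 < 2 * a ^ 2 - a ^ 2 * Real.cos ω ^ 2 - Real.sin ω ^ 2) :
    2 * a ^ 2 +
      (Real.cos ω - a ^ 2 * Real.cos ω -
          a * Real.sqrt (2 * a ^ 2 - a ^ 2 * Real.cos ω ^ 2 - Real.sin ω ^ 2)) /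
        (a ^ 2 * Real.sin ω ^ 2 + Real.cos ω ^ 2) - 1 > 0 := by
  have hc0 : 0 < Real.cos ω := Real.cos_pos_of_mem_Ioo ⟨by linarith [Real.pi_pos], hω⟩
  have hc1 : Real.cos ω < 1 := by
    simpa using Real.cos_lt_cos_of_nonneg_of_le_pi le_rfl (by linarith [Real.pi_pos]) hω0
  have ha2 : a ^ 2 < 1 / 2 := by
    rw [one_div, ← Real.sqrt_inv] at ha
    simpa using (Real.lt_sqrt ha0.le).1 ha
  have := one_sub_two_mul_sq_lt_lower_intersection (Real.sin_sq_add_cos_sq ω) ha2 hc0 hc1 hq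
  linarith
end

section
/- Let a and t be real numbers with 0 < t < 1, a > 0 and a² < 1/2, and suppose q := (t⁴ + 6t² + 1)·a² − 4t² > 0. Then a·(t² + 1)·√q < 2 − 3a² − a²·t⁴ − 2·(2a² − 1)²·t². -/
/-!
Write `u = 1 - 2a²`, so that `0 < u ≤ 1`, and `T = t²`. The right-hand side is
`(1 - T)((1 + T) + u(3 - T))/2 + 2uT(1 - u)`, visibly positive, and its square exceeds
`a²(1 + T)²q` by `2u(2u(1 - T)² + (1 - u)h)` with
`h = (1 + T)(1 + T²) + uT(1 - T)² + 2uT(1 - uT) > 0`.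
-/

section

variable {a t : ℝ}

theorem size_rhs_pos (ha : a ^ 2 < 1 / 2) (ht : t ^ 2 < 1) :
    0 < 2 - 3 * a ^ 2 - a ^ 2 * t ^ 4 - 2 * (2 * a ^ 2 - 1) ^ 2 * t ^ 2 := by
  have hu : 0 < 1 - 2 * a ^ 2 := by linarith
  have hv : 0 < 1 - t ^ 2 := by linarith
  have hw : 0 < (1 + t ^ 2) + (1 - 2 * a ^ 2) * (3 - t ^ 2) := by nlinarith
  have hvw := mul_pos hv hw
  have hx : 0 ≤ a ^ 2 * t ^ 2 * (1 - 2 * a ^ 2) := by positivity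
  linear_combination hvw / 2 + 4 * hx

theorem sq_mul_sq_lt_sq_size_rhs (ha : a ^ 2 < 1 / 2) (ht : t ^ 2 < 1) :
    (a * (t ^ 2 + 1)) ^ 2 * ((t ^ 4 + 6 * t ^ 2 + 1) * a ^ 2 - 4 * t ^ 2) <
      (2 - 3 * a ^ 2 - a ^ 2 * t ^ 4 - 2 * (2 * a ^ 2 - 1) ^ 2 * t ^ 2) ^ 2 := by
  have hu : 0 < 1 - 2 * a ^ 2 := by linarith
  have hv : 0 < 1 - t ^ 2 := by linarith
  have hut : 0 < 1 - (1 - 2 * a ^ 2) * t ^ 2 := by nlinarith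
  have hgap : 0 < 2 * (1 - 2 * a ^ 2) * (2 * (1 - 2 * a ^ 2) * (1 - t ^ 2) ^ 2 + 2 * a ^ 2 *
      ((1 + t ^ 2) * (1 + t ^ 4) + (1 - 2 * a ^ 2) * t ^ 2 * (1 - t ^ 2) ^ 2
        + 2 * (1 - 2 * a ^ 2) * t ^ 2 * (1 - (1 - 2 * a ^ 2) * t ^ 2))) := by
    positivity
  linear_combination hgap

end

theorem size_inequality_algebraic_general
    (a t : ℝ) (ht0 : 0 < t) (ht1 : t < 1) (ha : a ^ 2 < 1 / 2) :
    a * (t ^ 2 + 1) * Real.sqrt ((t ^ 4 + 6 * t ^ 2 + 1) * a ^ 2 - 4 * t ^ 2) <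
      2 - 3 * a ^ 2 - a ^ 2 * t ^ 4 - 2 * (2 * a ^ 2 - 1) ^ 2 * t ^ 2 := by
  have ht : t ^ 2 < 1 := pow_lt_one₀ ht0.le ht1 two_ne_zero
  calc _ ≤ |a * (t ^ 2 + 1)| * Real.sqrt ((t ^ 4 + 6 * t ^ 2 + 1) * a ^ 2 - 4 * t ^ 2) :=
        mul_le_mul_of_nonneg_right (le_abs_self _) (Real.sqrt_nonneg _)
    _ = Real.sqrt ((a * (t ^ 2 + 1)) ^ 2 * ((t ^ 4 + 6 * t ^ 2 + 1) * a ^ 2 - 4 * t ^ 2)) := by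
        rw [Real.sqrt_mul (sq_nonneg _), Real.sqrt_sq_eq_abs]
    _ < _ := (Real.sqrt_lt' (size_rhs_pos ha ht)).2 (sq_mul_sq_lt_sq_size_rhs ha ht)

/-- Inequality (eq:size) from the proof of Lemma 4.1: after the substitution
`ω = 2 arctan t`, the size comparison `2a² + ℓ − 1 > 0` becomes
`a(t²+1)√q < 2 − 3a² − a²t⁴ − 2(2a²−1)²t²` where `q = (t⁴+6t²+1)a² − 4t²`. -/
theorem size_inequality_algebraic
    (a t : ℝ) (ht0 : 0 < t) (ht1 : t < 1) (ha0 : 0 < a) (ha : a ^ 2 < 1 / 2)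
    (hq : 0 < (t ^ 4 + 6 * t ^ 2 + 1) * a ^ 2 - 4 * t ^ 2) :
    a * (t ^ 2 + 1) * Real.sqrt ((t ^ 4 + 6 * t ^ 2 + 1) * a ^ 2 - 4 * t ^ 2) <
      2 - 3 * a ^ 2 - a ^ 2 * t ^ 4 - 2 * (2 * a ^ 2 - 1) ^ 2 * t ^ 2 :=
  size_inequality_algebraic_general a t ht0 ht1 ha
end

section
/- Let a, t, x, y be real numbers with 0 < a < 1/√2, 0 < t < 1 and x² + y² < 1. Suppose that (4a²t² + t⁴ − 2t² + 1)·y² − 2(t² − 1)(a² − 1)(t² + 2tx + 1)·y + ((t² − 1)²x² − (4t³ + 4t)x − 2(t² + 1)²)·a² + (t² + 2tx + 1)² < 0 and (4a²t² + t⁴ − 2t² + 1)·y² − 2(t² − 1)(a² − 1)(t² − 2tx + 1)·y + ((t² − 1)²x² + (4t³ + 4t)x − 2(t² + 1)²)·a² + (t² − 2tx + 1)² < 0. Then a·(t² + 1)·(x² + 2y − 2)·√q + ((2 − x² − 2y)·a² + 2x² + 2y² − 2)·t⁴ + 4·(a² − 1/2)·(x² + 2y² − 2y)·t² + (x² + 2y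 − 2)·a² + 2·(y − 1)² < 0, where q = (t⁴ + 6t² + 1)·a² − 4t². -/
/-!
The two hypotheses are mirror images under `x ↦ -x`, and their sum is the conic
`A y² + B y + C + K x² < 0`. On the axis `x = 0` its roots are the two intersection points
`y₀ < y₁` of the horocycles, and `y₁ < 1`. With `D = √(B² - 4AC)` the smaller horocycle reads
`(y - 1)(2Ay + B + D) + N x² < 0`, and `4AD` times its left-hand side is `4A(2A + B + D)` times
the conic minus `(2A + B - D)(2Ay + B + D)²` and `4A((2A + B + D)K - ND) x²`; the last
coefficient is nonnegative because `a² < 1/2` and `t² < 1`.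
-/

section Quadratic

variable {R : Type*} [CommRing R]

theorem sq_two_mul_add_eq_discrim_add (a b c y : R) :
    (2 * a * y + b) ^ 2 = discrim a b c + 4 * a * (a * (y * y) + b * y + c) := by
  unfold discrim; ring

variable [LinearOrder R] [IsStrictOrderedRing R]

theorem discrim_pos_of_quadratic_neg {a b c y : R} (ha : 0 < a)
    (h : a * (y * y) + b * y + c < 0) : 0 < discrim a b c := by
  have := sq_two_mul_add_eq_discrim_add a b c y
  nlinarith [sq_nonneg (2 * a * y + b)]

theorem lt_two_mul_add_of_quadratic_neg_of_pos {a b c d y z : R} (ha : 0 < a) (hd : 0 ≤ d)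
    (hdisc : discrim a b c = d ^ 2) (hy : a * (y * y) + b * y + c < 0)
    (hz : 0 < a * (z * z) + b * z + c) (hyz : y < z) : d < 2 * a * z + b := by
  have hy' := sq_two_mul_add_eq_discrim_add a b c y
  have hz' := sq_two_mul_add_eq_discrim_add a b c z
  rw [hdisc] at hy' hz'
  have hlow : -d < 2 * a * y + b :=
    (abs_lt.mp (abs_lt_of_sq_lt_sq (by nlinarith) hd)).1
  by_contra! h
  exact (sq_le_sq' (by nlinarith) h).not_gt (by nlinarith)

/-- `(y - 1) * (2 A y + B + D) = 2 A (y - 1) (y - y₀)`, where `y₀ = -(B + D) / (2 A)` is the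
smaller root of `A y² + B y + C`. -/
theorem sub_one_mul_add_mul_sq_neg {A B C D K N x y : R} (hA : 0 < A) (hD : 0 < D)
    (hdisc : discrim A B C = D ^ 2) (hDle : D ≤ 2 * A + B) (hN : N * D ≤ (2 * A + B + D) * K)
    (h : A * (y * y) + B * y + C + K * x ^ 2 < 0) :
    (y - 1) * (2 * A * y + B + D) + N * x ^ 2 < 0 := by
  have key : 4 * A * D * ((y - 1) * (2 * A * y + B + D) + N * x ^ 2) =
      4 * A * (2 * A + B + D) * (A * (y * y) + B * y + C + K * x ^ 2)
        - (2 * A + B - D) * (2 * A * y + B + D) ^ 2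
        - 4 * A * ((2 * A + B + D) * K - N * D) * x ^ 2 := by
    unfold discrim at hdisc
    linear_combination (2 * A + B + D) * hdisc
  refine neg_of_mul_neg_right (a := 4 * A * D) ?_ (by positivity)
  rw [key]
  have h₁ : 4 * A * (2 * A + B + D) * (A * (y * y) + B * y + C + K * x ^ 2) < 0 :=
    mul_neg_of_pos_of_neg (mul_pos (by positivity) (by linarith)) h
  have h₂ : 0 ≤ (2 * A + B - D) * (2 * A * y + B + D) ^ 2 :=
    mul_nonneg (by linarith) (sq_nonneg _)
  have h₃ : 0 ≤ 4 * A * ((2 * A + B + D) * K - N * D) * x ^ 2 :=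
    mul_nonneg (mul_nonneg (by positivity) (by linarith)) (sq_nonneg _)
  linarith

end Quadratic

namespace Horocycle

/-- `horocycle a t x y < 0` is the interior of the horocycle of size `a` rotated by
`ω = 2 arctan t`; the one rotated by `-ω` is its mirror image `horocycle a t (-x) y < 0`. -/
def horocycle (a t x y : ℝ) : ℝ :=
  (4 * a ^ 2 * t ^ 2 + t ^ 4 - 2 * t ^ 2 + 1) * y ^ 2 -
    2 * (t ^ 2 - 1) * (a ^ 2 - 1) * (t ^ 2 + 2 * t * x + 1) * y +
    ((t ^ 2 - 1) ^ 2 * x ^ 2 - (4 * t ^ 3 + 4 * t) * x - 2 * (t ^ 2 + 1) ^ 2) * a ^ 2 +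
    (t ^ 2 + 2 * t * x + 1) ^ 2

/-- The horocycle tangent to the unit circle at `(0, 1)` through the lower intersection point,
with `r` standing for `√(radicand a t)`. -/
noncomputable def smallHorocycle (a t r x y : ℝ) : ℝ :=
  a * (t ^ 2 + 1) * (x ^ 2 + 2 * y - 2) * r +
    ((2 - x ^ 2 - 2 * y) * a ^ 2 + 2 * x ^ 2 + 2 * y ^ 2 - 2) * t ^ 4 +
    4 * (a ^ 2 - 1 / 2) * (x ^ 2 + 2 * y ^ 2 - 2 * y) * t ^ 2 +
    (x ^ 2 + 2 * y - 2) * a ^ 2 + 2 * (y - 1) ^ 2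

variable (a t : ℝ)

def sqCoeff : ℝ := (t ^ 2 - 1) ^ 2 + 4 * a ^ 2 * t ^ 2

def linCoeff : ℝ := -2 * (t ^ 2 - 1) * (a ^ 2 - 1) * (t ^ 2 + 1)

def constCoeff : ℝ := (t ^ 2 + 1) ^ 2 * (1 - 2 * a ^ 2)

def xCoeff : ℝ := (t ^ 2 - 1) ^ 2 * a ^ 2 + 4 * t ^ 2

def radicand : ℝ := (t ^ 4 + 6 * t ^ 2 + 1) * a ^ 2 - 4 * t ^ 2

def smallXCoeff (r : ℝ) : ℝ :=
  a ^ 2 * (1 + 4 * t ^ 2 - t ^ 4) + 2 * t ^ 4 - 2 * t ^ 2 + (t ^ 2 + 1) * a * r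

theorem horocycle_add_horocycle_neg (x y : ℝ) :
    horocycle a t x y + horocycle a t (-x) y =
      2 * (sqCoeff a t * (y * y) + linCoeff a t * y + constCoeff a t + xCoeff a t * x ^ 2) := by
  unfold horocycle sqCoeff linCoeff constCoeff xCoeff; ring

theorem discrim_eq :
    discrim (sqCoeff a t) (linCoeff a t) (constCoeff a t) =
      (2 * (t ^ 2 + 1) * a) ^ 2 * radicand a t := by
  unfold discrim sqCoeff linCoeff constCoeff radicand; ring

theorem sqCoeff_add_linCoeff_add_constCoeff :
    sqCoeff a t + linCoeff a t + constCoeff a t = 4 * t ^ 4 * (1 - a ^ 2) := by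
  unfold sqCoeff linCoeff constCoeff; ring

theorem smallHorocycle_eq (r x y : ℝ) :
    smallHorocycle a t r x y =
      (y - 1) * (2 * sqCoeff a t * y + linCoeff a t + 2 * (t ^ 2 + 1) * a * r) +
        smallXCoeff a t r * x ^ 2 := by
  unfold smallHorocycle smallXCoeff sqCoeff linCoeff; ring

variable {a t}

theorem smallXCoeff_mul_le {r : ℝ} (ha : 0 ≤ a) (ha2 : a ^ 2 < 1 / 2) (ht : t ^ 2 < 1)
    (hr0 : 0 ≤ r) (hr : r ^ 2 = radicand a t) :
    smallXCoeff a t r * (2 * (t ^ 2 + 1) * a * r) ≤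
      (2 * sqCoeff a t + linCoeff a t + 2 * (t ^ 2 + 1) * a * r) * xCoeff a t := by
  have key : (2 * sqCoeff a t + linCoeff a t + 2 * (t ^ 2 + 1) * a * r) * xCoeff a t -
      smallXCoeff a t r * (2 * (t ^ 2 + 1) * a * r) =
      2 * t ^ 2 * (3 - t ^ 2) * (1 - a ^ 2) * (2 * (t ^ 2 + 1) * a * r) +
        4 * t ^ 2 * ((1 - t ^ 2) * r ^ 2 +
          a ^ 2 * (1 / 2 - a ^ 2) * (3 + 11 * t ^ 2 + t ^ 4 + t ^ 6) +
          a ^ 2 / 2 * (1 + 9 * t ^ 2 + 3 * t ^ 4 + 3 * t ^ 6)) := by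
    unfold sqCoeff linCoeff xCoeff smallXCoeff radicand at *
    linear_combination (-4 * t ^ 2 * (1 - t ^ 2) - 2 * a ^ 2 * (1 + t ^ 2) ^ 2) * hr
  have h3 : 0 ≤ 3 - t ^ 2 := by linarith
  have h1 : 0 ≤ 1 - t ^ 2 := by linarith
  have ha1 : 0 ≤ 1 - a ^ 2 := by linarith
  have ha1' : 0 ≤ 1 / 2 - a ^ 2 := by linarith
  rw [← sub_nonneg, key]
  positivity

end Horocycle

open Horocycle

/-- Inequalities (eq:int0b), (eq:int1b) imply (eq:int2b) in the proof of part 2 of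
Lemma 4.1: if `(x,y)` lies in the common interior of the two horocycles of size `a`
(in the algebraic form obtained by the substitution `ω = 2 arctan t`), then it lies in
the interior of the smaller horocycle through their lower intersection point. -/
theorem common_interior_in_smaller_horocycle_algebraic
    (a t x y : ℝ) (ha0 : 0 < a) (ha : a < 1 / Real.sqrt 2)
    (ht0 : 0 < t) (ht1 : t < 1) (hxy : x ^ 2 + y ^ 2 < 1)
    (h0 : (4 * a ^ 2 * t ^ 2 + t ^ 4 - 2 * t ^ 2 + 1) * y ^ 2 -
        2 * (t ^ 2 - 1) * (a ^ 2 - 1) * (t ^ 2 + 2 * t * x + 1) * y +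
        ((t ^ 2 - 1) ^ 2 * x ^ 2 - (4 * t ^ 3 + 4 * t) * x - 2 * (t ^ 2 + 1) ^ 2) * a ^ 2 +
        (t ^ 2 + 2 * t * x + 1) ^ 2 < 0)
    (h1 : (4 * a ^ 2 * t ^ 2 + t ^ 4 - 2 * t ^ 2 + 1) * y ^ 2 -
        2 * (t ^ 2 - 1) * (a ^ 2 - 1) * (t ^ 2 - 2 * t * x + 1) * y +
        ((t ^ 2 - 1) ^ 2 * x ^ 2 + (4 * t ^ 3 + 4 * t) * x - 2 * (t ^ 2 + 1) ^ 2) * a ^ 2 +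
        (t ^ 2 - 2 * t * x + 1) ^ 2 < 0) :
    a * (t ^ 2 + 1) * (x ^ 2 + 2 * y - 2) *
        Real.sqrt ((t ^ 4 + 6 * t ^ 2 + 1) * a ^ 2 - 4 * t ^ 2) +
      ((2 - x ^ 2 - 2 * y) * a ^ 2 + 2 * x ^ 2 + 2 * y ^ 2 - 2) * t ^ 4 +
      4 * (a ^ 2 - 1 / 2) * (x ^ 2 + 2 * y ^ 2 - 2 * y) * t ^ 2 +
      (x ^ 2 + 2 * y - 2) * a ^ 2 + 2 * (y - 1) ^ 2 < 0 := by
  have ha2 : a ^ 2 < 1 / 2 := by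
    have := pow_lt_pow_left₀ ha ha0.le two_ne_zero
    rwa [div_pow, Real.sq_sqrt zero_le_two, one_pow] at this
  have ht2 : t ^ 2 < 1 := pow_lt_one₀ ht0.le ht1 two_ne_zero
  have hy1 : y < 1 := by nlinarith
  have hA : 0 < sqCoeff a t := by unfold sqCoeff; positivity
  have hS : sqCoeff a t * (y * y) + linCoeff a t * y + constCoeff a t + xCoeff a t * x ^ 2 < 0 := by
    have h1' : horocycle a t (-x) y < 0 := by unfold horocycle; linarith
    linarith [horocycle_add_horocycle_neg a t x y, show horocycle a t x y < 0 from h0]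
  have hP : sqCoeff a t * (y * y) + linCoeff a t * y + constCoeff a t < 0 := by
    have : 0 ≤ xCoeff a t * x ^ 2 := by unfold xCoeff; positivity
    linarith
  have hq : 0 < radicand a t := by
    have := discrim_pos_of_quadratic_neg hA hP
    rw [discrim_eq] at this
    exact pos_of_mul_pos_right this (sq_nonneg _)
  set r := Real.sqrt (radicand a t)
  have hr : r ^ 2 = radicand a t := Real.sq_sqrt hq.le
  have hD : 0 < 2 * (t ^ 2 + 1) * a * r := by positivity
  have hdisc : discrim (sqCoeff a t) (linCoeff a t) (constCoeff a t) =
      (2 * (t ^ 2 + 1) * a * r) ^ 2 := by rw [discrim_eq, ← hr]; ring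
  have hP1 : 0 < sqCoeff a t * (1 * 1) + linCoeff a t * 1 + constCoeff a t := by
    simp only [mul_one]; rw [sqCoeff_add_linCoeff_add_constCoeff]
    exact mul_pos (by positivity) (by nlinarith)
  have hDlt := lt_two_mul_add_of_quadratic_neg_of_pos hA hD.le hdisc hP hP1 hy1
  rw [mul_one] at hDlt
  show smallHorocycle a t r x y < 0
  rw [smallHorocycle_eq]
  exact sub_one_mul_add_mul_sq_neg hA hD hdisc hDlt.le
    (smallXCoeff_mul_le ha0.le ha2 ht2 (Real.sqrt_nonneg _) hr) hS
end

section
/- Let a, t, x, y be real numbers with 0 < a < 1/√2, 0 < t < 1 and x² + y² < 1. Suppose that (4a²t² + t⁴ − 2t² + 1)·y² − 2(t² − 1)(a² − 1)(t² + 2tx + 1)·y + ((t² − 1)²x² − (4t³ + 4t)x − 2(t² + 1)²)·a² + (t² + 2tx + 1)² < 0 and (4a²t² + t⁴ − 2t² + 1)·y² − 2(t² − 1)(a² − 1)(t² − 2tx + 1)·y + ((t² − 1)²x² + (4t³ + 4t)x − 2(t² + 1)²)·a² + (t² − 2tx + 1)² < 0. Then k > 0, where k = (x² + y² − 1)·((x²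 + 2y − 2)·a² − x² − y² + 1)·t⁴ − 4·(x² + y² − 1)·(y − 1)²·(a² − 1/2)·t² − (y − 1)²·(y² + (2a² − 2)·y + 1 + (x² − 2)·a²). -/
/-!
Both hypotheses have the form `(1 - a²)(w ± 2tx)² < a²(1 - x² - y²)(1 + t²)²` with
`w = (1 - y) + t²(1 + y)`. Adding them cancels the cross terms `± 4(1 - a²)twx`, so
`(1 - a²)w² < a²(1 - x² - y²)(1 + t²)²`. Up to a term that is nonnegative inside the unit disc,
`k` is `(1 - y)²` times the gap of this inequality.
-/

/-- Expanded, this is the left-hand side of (eq:int0b); that of (eq:int1b) is its value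
at `-x`. -/
def horocycleForm (a t x y : ℝ) : ℝ :=
  (1 - a ^ 2) * (1 - y + t ^ 2 * (1 + y) + 2 * t * x) ^ 2 -
    a ^ 2 * (1 - x ^ 2 - y ^ 2) * (1 + t ^ 2) ^ 2

theorem horocycleForm_add_neg (a t x y : ℝ) :
    horocycleForm a t x y + horocycleForm a t (-x) y =
      2 * ((1 - a ^ 2) * ((1 - y + t ^ 2 * (1 + y)) ^ 2 + 4 * t ^ 2 * x ^ 2) -
        a ^ 2 * (1 - x ^ 2 - y ^ 2) * (1 + t ^ 2) ^ 2) := by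
  unfold horocycleForm; ring

theorem lt_of_horocycleForm_neg {a t x y : ℝ} (ha : a ^ 2 < 1)
    (hpos : horocycleForm a t x y < 0) (hneg : horocycleForm a t (-x) y < 0) :
    (1 - a ^ 2) * (1 - y + t ^ 2 * (1 + y)) ^ 2 <
      a ^ 2 * (1 - x ^ 2 - y ^ 2) * (1 + t ^ 2) ^ 2 := by
  have hcross : 0 ≤ (1 - a ^ 2) * (4 * t ^ 2 * x ^ 2) := by
    have := sub_pos.2 ha
    positivity
  linarith [horocycleForm_add_neg a t x y]

theorem sq_lt_half_of_lt_one_div_sqrt_two {a : ℝ} (ha0 : 0 ≤ a) (ha : a < 1 / √2) :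
    a ^ 2 < 1 / 2 := by
  calc a ^ 2 < (1 / √2) ^ 2 := pow_lt_pow_left₀ ha ha0 two_ne_zero
    _ = 1 / 2 := by rw [div_pow, Real.sq_sqrt zero_le_two, one_pow]

/-- The polynomial `k` of (eq:int2c). -/
noncomputable def kPoly (a t x y : ℝ) : ℝ :=
  (x ^ 2 + y ^ 2 - 1) * ((x ^ 2 + 2 * y - 2) * a ^ 2 - x ^ 2 - y ^ 2 + 1) * t ^ 4 -
    4 * (x ^ 2 + y ^ 2 - 1) * (y - 1) ^ 2 * (a ^ 2 - 1 / 2) * t ^ 2 -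
    (y - 1) ^ 2 * (y ^ 2 + (2 * a ^ 2 - 2) * y + 1 + (x ^ 2 - 2) * a ^ 2)

theorem kPoly_eq (a t x y : ℝ) :
    kPoly a t x y =
      (1 - y) ^ 2 * (a ^ 2 * (1 - x ^ 2 - y ^ 2) * (1 + t ^ 2) ^ 2 -
          (1 - a ^ 2) * (1 - y + t ^ 2 * (1 + y)) ^ 2) +
        (1 - a ^ 2) * x ^ 2 * t ^ 2 *
          (2 * (1 - y) ^ 2 + t ^ 2 * ((1 - y ^ 2) + (1 - x ^ 2 - y ^ 2))) := by
  unfold kPoly; ring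

theorem kPoly_pos {a t x y : ℝ} (ha : a ^ 2 < 1) (hxy : x ^ 2 + y ^ 2 < 1)
    (hpos : horocycleForm a t x y < 0) (hneg : horocycleForm a t (-x) y < 0) :
    0 < kPoly a t x y := by
  have hy : y ^ 2 < 1 := by nlinarith
  have hy1 : 0 < 1 - y := by nlinarith
  rw [kPoly_eq]
  refine add_pos_of_pos_of_nonneg
    (mul_pos (pow_pos hy1 2) (sub_pos.2 (lt_of_horocycleForm_neg ha hpos hneg))) ?_
  have hdisc : 0 ≤ (1 - y ^ 2) + (1 - x ^ 2 - y ^ 2) := by linarith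
  have := sub_pos.2 ha
  positivity

theorem quantifier_elimination_claim_general
    (a t x y : ℝ) (ha0 : 0 < a) (ha : a < 1 / Real.sqrt 2)
    (hxy : x ^ 2 + y ^ 2 < 1)
    (h0 : (4 * a ^ 2 * t ^ 2 + t ^ 4 - 2 * t ^ 2 + 1) * y ^ 2 -
        2 * (t ^ 2 - 1) * (a ^ 2 - 1) * (t ^ 2 + 2 * t * x + 1) * y +
        ((t ^ 2 - 1) ^ 2 * x ^ 2 - (4 * t ^ 3 + 4 * t) * x - 2 * (t ^ 2 + 1) ^ 2) * a ^ 2 +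
        (t ^ 2 + 2 * t * x + 1) ^ 2 < 0)
    (h1 : (4 * a ^ 2 * t ^ 2 + t ^ 4 - 2 * t ^ 2 + 1) * y ^ 2 -
        2 * (t ^ 2 - 1) * (a ^ 2 - 1) * (t ^ 2 - 2 * t * x + 1) * y +
        ((t ^ 2 - 1) ^ 2 * x ^ 2 + (4 * t ^ 3 + 4 * t) * x - 2 * (t ^ 2 + 1) ^ 2) * a ^ 2 +
        (t ^ 2 - 2 * t * x + 1) ^ 2 < 0) :
    0 < (x ^ 2 + y ^ 2 - 1) * ((x ^ 2 + 2 * y - 2) * a ^ 2 - x ^ 2 - y ^ 2 + 1) * t ^ 4 -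
      4 * (x ^ 2 + y ^ 2 - 1) * (y - 1) ^ 2 * (a ^ 2 - 1 / 2) * t ^ 2 -
      (y - 1) ^ 2 * (y ^ 2 + (2 * a ^ 2 - 2) * y + 1 + (x ^ 2 - 2) * a ^ 2) := by
  have ha2 : a ^ 2 < 1 := (sq_lt_half_of_lt_one_div_sqrt_two ha0.le ha).trans (by norm_num)
  have hpos : horocycleForm a t x y < 0 := by unfold horocycleForm; linarith
  have hneg : horocycleForm a t (-x) y < 0 := by unfold horocycleForm; linarith
  exact kPoly_pos ha2 hxy hpos hneg

/-- The quantifier-elimination claim at the end of the proof of Lemma 4.1: the algebraic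
interior conditions (eq:int0b), (eq:int1b) imply positivity of the polynomial `k` from
(eq:int2c). -/
theorem quantifier_elimination_claim
    (a t x y : ℝ) (ha0 : 0 < a) (ha : a < 1 / Real.sqrt 2)
    (ht0 : 0 < t) (ht1 : t < 1) (hxy : x ^ 2 + y ^ 2 < 1)
    (h0 : (4 * a ^ 2 * t ^ 2 + t ^ 4 - 2 * t ^ 2 + 1) * y ^ 2 -
        2 * (t ^ 2 - 1) * (a ^ 2 - 1) * (t ^ 2 + 2 * t * x + 1) * y +
        ((t ^ 2 - 1) ^ 2 * x ^ 2 - (4 * t ^ 3 + 4 * t) * x - 2 * (t ^ 2 + 1) ^ 2) * a ^ 2 +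
        (t ^ 2 + 2 * t * x + 1) ^ 2 < 0)
    (h1 : (4 * a ^ 2 * t ^ 2 + t ^ 4 - 2 * t ^ 2 + 1) * y ^ 2 -
        2 * (t ^ 2 - 1) * (a ^ 2 - 1) * (t ^ 2 - 2 * t * x + 1) * y +
        ((t ^ 2 - 1) ^ 2 * x ^ 2 + (4 * t ^ 3 + 4 * t) * x - 2 * (t ^ 2 + 1) ^ 2) * a ^ 2 +
        (t ^ 2 - 2 * t * x + 1) ^ 2 < 0) :
    0 < (x ^ 2 + y ^ 2 - 1) * ((x ^ 2 + 2 * y - 2) * a ^ 2 - x ^ 2 - y ^ 2 + 1) * t ^ 4 -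
      4 * (x ^ 2 + y ^ 2 - 1) * (y - 1) ^ 2 * (a ^ 2 - 1 / 2) * t ^ 2 -
      (y - 1) ^ 2 * (y ^ 2 + (2 * a ^ 2 - 2) * y + 1 + (x ^ 2 - 2) * a ^ 2) :=
  quantifier_elimination_claim_general a t x y ha0 ha hxy h0 h1
end

section
/- Let a₁, b₁, c₂ be real numbers with a₁ ≠ b₁ and c₂ ≠ 0, and let E(λ) = λ³ − (a₁ + b₁)·λ² + (−a₁² + a₁b₁ − b₁² − 2c₂²)·λ + a₁·(a₁² + c₂²) + b₁·(b₁² + c₂²). Then E(a₁)·E(b₁) = −(b₁² + c₂²)·(a₁ − b₁)²·(a₁² + c₂²), and in particular E(a₁)·E(b₁) < 0. -/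
/-- For the cubic `E` arising in the proof of Theorem 3.1, one has
`E(a₁)·E(b₁) = −(b₁² + c₂²)(a₁ − b₁)²(a₁² + c₂²) < 0`. -/
theorem cubic_sign_change
    (a₁ b₁ c₂ : ℝ) (hab : a₁ ≠ b₁) (hc : c₂ ≠ 0)
    (E : ℝ → ℝ)
    (hE : ∀ l : ℝ, E l = l ^ 3 - (a₁ + b₁) * l ^ 2 +
      (-a₁ ^ 2 + a₁ * b₁ - b₁ ^ 2 - 2 * c₂ ^ 2) * l +
      a₁ * (a₁ ^ 2 + c₂ ^ 2) + b₁ * (b₁ ^ 2 + c₂ ^ 2)) :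
    E a₁ * E b₁ = -(b₁ ^ 2 + c₂ ^ 2) * (a₁ - b₁) ^ 2 * (a₁ ^ 2 + c₂ ^ 2) ∧
      E a₁ * E b₁ < 0 := by
  have hprod : E a₁ * E b₁ = -(b₁ ^ 2 + c₂ ^ 2) * (a₁ - b₁) ^ 2 * (a₁ ^ 2 + c₂ ^ 2) := by
    rw [hE, hE]; ring
  have hsub : a₁ - b₁ ≠ 0 := sub_ne_zero.mpr hab
  refine ⟨hprod, ?_⟩
  rw [hprod, neg_mul, neg_mul, neg_lt_zero]
  positivity
end

section
/- Let a₁, b₁, c₂ be real numbers with a₁ < b₁ and c₂ ≠ 0, and let E(λ) = λ³ − (a₁ + b₁)·λ² + (−a₁² + a₁b₁ − b₁² − 2c₂²)·λ + a₁·(a₁² + c₂²) + b₁·(b₁² + c₂²). Then there exists λ with a₁ < λ < b₁ and E(λ) = 0. -/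
/-! The cubic takes the values `(b₁ - a₁)(b₁² + c₂²) > 0` at `a₁` and
`-(b₁ - a₁)(a₁² + c₂²) < 0` at `b₁`, so it changes sign on `[a₁, b₁]`. -/

def tangencyCubic (a b c l : ℝ) : ℝ :=
  l ^ 3 - (a + b) * l ^ 2 + (-a ^ 2 + a * b - b ^ 2 - 2 * c ^ 2) * l +
    a * (a ^ 2 + c ^ 2) + b * (b ^ 2 + c ^ 2)

namespace tangencyCubic

variable (a b c : ℝ)

theorem continuous : Continuous (tangencyCubic a b c) := by
  unfold tangencyCubic; fun_prop

theorem apply_left : tangencyCubic a b c a = (b - a) * (b ^ 2 + c ^ 2) := by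
  unfold tangencyCubic; ring

theorem apply_right : tangencyCubic a b c b = -((b - a) * (a ^ 2 + c ^ 2)) := by
  unfold tangencyCubic; ring

variable {a b c}

theorem apply_left_pos (hab : a < b) (hc : c ≠ 0) : 0 < tangencyCubic a b c a := by
  rw [apply_left]; have := sub_pos.2 hab; positivity

theorem apply_right_neg (hab : a < b) (hc : c ≠ 0) : tangencyCubic a b c b < 0 := by
  rw [apply_right, neg_neg_iff_pos]; have := sub_pos.2 hab; positivity

end tangencyCubic

/-- The cubic `E` from the proof of Theorem 3.1 has a root strictly between `a₁` and
`b₁`; this root is the tangency abscissa of the exparabola touching side `AB` between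
`A` and `B`. -/
theorem cubic_root_between
    (a₁ b₁ c₂ : ℝ) (hab : a₁ < b₁) (hc : c₂ ≠ 0)
    (E : ℝ → ℝ)
    (hE : ∀ l : ℝ, E l = l ^ 3 - (a₁ + b₁) * l ^ 2 +
      (-a₁ ^ 2 + a₁ * b₁ - b₁ ^ 2 - 2 * c₂ ^ 2) * l +
      a₁ * (a₁ ^ 2 + c₂ ^ 2) + b₁ * (b₁ ^ 2 + c₂ ^ 2)) :
    ∃ l : ℝ, a₁ < l ∧ l < b₁ ∧ E l = 0 := by
  obtain rfl : E = tangencyCubic a₁ b₁ c₂ := funext hE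
  obtain ⟨l, ⟨hal, hlb⟩, hl⟩ :=
    intermediate_value_Ioo' hab.le (tangencyCubic.continuous a₁ b₁ c₂).continuousOn
      ⟨tangencyCubic.apply_right_neg hab hc, tangencyCubic.apply_left_pos hab hc⟩
  exact ⟨l, hal, hlb, hl⟩
end

section
/- Let a₁, b₁, c₂ be real numbers with a₁ < b₁ and c₂ ≠ 0, and let E(λ) = λ³ − (a₁ + b₁)·λ² + (−a₁² + a₁b₁ − b₁² − 2c₂²)·λ + a₁·(a₁² + c₂²) + b₁·(b₁² + c₂²). Then E has three distinct real roots, and exactly one of them lies in the open interval (a₁, b₁). -/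
/-!
Write `E` as a monic cubic polynomial. Then `E(a₁) = (b₁ - a₁)(b₁² + c₂²) > 0` and
`E(b₁) = -(b₁ - a₁)(a₁² + c₂²) < 0`, both strict because `c₂ ≠ 0`. Since `E → ∓∞` as `λ → ∓∞`,
the intermediate value theorem gives a root in each of `(-∞, a₁)`, `(a₁, b₁)` and `(b₁, ∞)`,
and a cubic has no further roots.
-/

open Polynomial Filter Set

theorem tendsto_pow_atBot_atBot_of_odd {R : Type*} [Ring R] [LinearOrder R]
    [IsStrictOrderedRing R] {n : ℕ} (hn : Odd n) : Tendsto (fun x : R => x ^ n) atBot atBot := by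
  have h : (fun x : R => x ^ n) = fun x => -(-x) ^ n := funext fun x => by rw [hn.neg_pow, neg_neg]
  rw [h]
  exact tendsto_neg_atTop_atBot.comp ((tendsto_pow_atTop hn.pos.ne').comp tendsto_neg_atBot_atTop)

namespace Polynomial

theorem tendsto_atBot_of_odd_natDegree {P : ℝ[X]} (hodd : Odd P.natDegree)
    (hlc : 0 < P.leadingCoeff) : Tendsto (fun x => P.eval x) atBot atBot :=
  P.isEquivalent_atBot_lead.symm.tendsto_atBot
    ((tendsto_pow_atBot_atBot_of_odd hodd).const_mul_atBot hlc)

theorem exists_isRoot_lt_of_eval_pos {P : ℝ[X]} (hodd : Odd P.natDegree)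
    (hlc : 0 < P.leadingCoeff) {a : ℝ} (ha : 0 < P.eval a) : ∃ r < a, P.IsRoot r :=
  intermediate_value_Iio P.continuous.continuousOn (tendsto_atBot_of_odd_natDegree hodd hlc) ha

theorem exists_isRoot_gt_of_eval_neg {P : ℝ[X]} (hdeg : 0 < P.degree)
    (hlc : 0 < P.leadingCoeff) {b : ℝ} (hb : P.eval b < 0) : ∃ r > b, P.IsRoot r :=
  intermediate_value_Ioi P.continuous.continuousOn
    (P.tendsto_atTop_of_leadingCoeff_nonneg hdeg hlc.le) hb

theorem exists_isRoot_mem_Ioo_of_eval_pos_of_eval_neg {P : ℝ[X]} {a b : ℝ} (hab : a ≤ b)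
    (ha : 0 < P.eval a) (hb : P.eval b < 0) : ∃ r ∈ Ioo a b, P.IsRoot r :=
  intermediate_value_Ioo' hab P.continuous.continuousOn ⟨hb, ha⟩

theorem mem_of_isRoot_of_card_eq_natDegree {R : Type*} [CommRing R] [IsDomain R] {P : R[X]}
    (hP : P ≠ 0) {s : Finset R} (hs : ∀ x ∈ s, P.IsRoot x) (hcard : s.card = P.natDegree)
    {x : R} (hx : P.IsRoot x) : x ∈ s := by
  classical
  by_contra hxs
  have hsub : insert x s ⊆ P.roots.toFinset := by
    intro y hy
    rw [Multiset.mem_toFinset, mem_roots hP]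
    rcases Finset.mem_insert.1 hy with rfl | hy
    exacts [hx, hs y hy]
  have := (Finset.card_le_card hsub).trans (P.roots.toFinset_card_le.trans P.card_roots')
  rw [Finset.card_insert_of_notMem hxs] at this
  omega

theorem exists_isRoot_iff_of_natDegree_eq_three {P : ℝ[X]} (hdeg : P.natDegree = 3)
    (hlc : 0 < P.leadingCoeff) {a b : ℝ} (hab : a < b) (ha : 0 < P.eval a)
    (hb : P.eval b < 0) :
    ∃ r₁ r₂ r₃, r₁ < a ∧ a < r₂ ∧ r₂ < b ∧ b < r₃ ∧
      ∀ x, P.IsRoot x ↔ x = r₁ ∨ x = r₂ ∨ x = r₃ := by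
  obtain ⟨r₁, hr₁, hroot₁⟩ := exists_isRoot_lt_of_eval_pos (by rw [hdeg]; decide) hlc ha
  obtain ⟨r₂, ⟨hr₂a, hr₂b⟩, hroot₂⟩ := exists_isRoot_mem_Ioo_of_eval_pos_of_eval_neg hab.le ha hb
  obtain ⟨r₃, hr₃, hroot₃⟩ :=
    exists_isRoot_gt_of_eval_neg (natDegree_pos_iff_degree_pos.1 (by omega)) hlc hb
  refine ⟨r₁, r₂, r₃, hr₁, hr₂a, hr₂b, hr₃, fun x => ⟨fun hx => ?_, ?_⟩⟩
  · have hcard : ({r₁, r₂, r₃} : Finset ℝ).card = P.natDegree :=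
      hdeg ▸ Finset.card_eq_three.2 ⟨r₁, r₂, r₃, by linarith, by linarith, by linarith, rfl⟩
    have hP : P ≠ 0 := by rintro rfl; simp at hdeg
    simpa using mem_of_isRoot_of_card_eq_natDegree hP
      (by simpa using ⟨hroot₁, hroot₂, hroot₃⟩) hcard hx
  · rintro (rfl | rfl | rfl) <;> assumption

end Polynomial

noncomputable def exparabolaCubic (a₁ b₁ c₂ : ℝ) : ℝ[X] :=
  X ^ 3 - C (a₁ + b₁) * X ^ 2 + C (-a₁ ^ 2 + a₁ * b₁ - b₁ ^ 2 - 2 * c₂ ^ 2) * X +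
    C (a₁ * (a₁ ^ 2 + c₂ ^ 2) + b₁ * (b₁ ^ 2 + c₂ ^ 2))

section exparabolaCubic

variable (a₁ b₁ c₂ : ℝ)

theorem eval_exparabolaCubic (l : ℝ) :
    (exparabolaCubic a₁ b₁ c₂).eval l = l ^ 3 - (a₁ + b₁) * l ^ 2 +
      (-a₁ ^ 2 + a₁ * b₁ - b₁ ^ 2 - 2 * c₂ ^ 2) * l +
      a₁ * (a₁ ^ 2 + c₂ ^ 2) + b₁ * (b₁ ^ 2 + c₂ ^ 2) := by
  simp [exparabolaCubic, add_assoc]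

theorem natDegree_exparabolaCubic : (exparabolaCubic a₁ b₁ c₂).natDegree = 3 := by
  unfold exparabolaCubic; compute_degree!

theorem monic_exparabolaCubic : (exparabolaCubic a₁ b₁ c₂).Monic := by
  unfold exparabolaCubic; monicity!

variable {a₁ b₁ c₂}

theorem exparabolaCubic_eval_a₁_pos (hab : a₁ < b₁) (hc : c₂ ≠ 0) :
    0 < (exparabolaCubic a₁ b₁ c₂).eval a₁ := by
  have h : (exparabolaCubic a₁ b₁ c₂).eval a₁ = (b₁ - a₁) * (b₁ ^ 2 + c₂ ^ 2) := by
    rw [eval_exparabolaCubic]; ring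
  rw [h]
  exact mul_pos (sub_pos.2 hab) (by positivity)

theorem exparabolaCubic_eval_b₁_neg (hab : a₁ < b₁) (hc : c₂ ≠ 0) :
    (exparabolaCubic a₁ b₁ c₂).eval b₁ < 0 := by
  have h : (exparabolaCubic a₁ b₁ c₂).eval b₁ = -((b₁ - a₁) * (a₁ ^ 2 + c₂ ^ 2)) := by
    rw [eval_exparabolaCubic]; ring
  rw [h, neg_neg_iff_pos]
  exact mul_pos (sub_pos.2 hab) (by positivity)

end exparabolaCubic

/-- The cubic `E` from the proof of Theorem 3.1 has three distinct real roots, exactly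
one of which lies in the open interval `(a₁, b₁)`: this is the algebraic content of the
existence of precisely three exparabolas of a triangle. -/
theorem cubic_three_roots
    (a₁ b₁ c₂ : ℝ) (hab : a₁ < b₁) (hc : c₂ ≠ 0)
    (E : ℝ → ℝ)
    (hE : ∀ l : ℝ, E l = l ^ 3 - (a₁ + b₁) * l ^ 2 +
      (-a₁ ^ 2 + a₁ * b₁ - b₁ ^ 2 - 2 * c₂ ^ 2) * l +
      a₁ * (a₁ ^ 2 + c₂ ^ 2) + b₁ * (b₁ ^ 2 + c₂ ^ 2)) :
    (∃ r₁ r₂ r₃ : ℝ, r₁ ≠ r₂ ∧ r₁ ≠ r₃ ∧ r₂ ≠ r₃ ∧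
      E r₁ = 0 ∧ E r₂ = 0 ∧ E r₃ = 0) ∧
    (∃! l : ℝ, a₁ < l ∧ l < b₁ ∧ E l = 0) := by
  obtain rfl : E = fun l => (exparabolaCubic a₁ b₁ c₂).eval l :=
    funext fun l => by rw [hE, eval_exparabolaCubic]
  obtain ⟨r₁, r₂, r₃, hr₁, hr₂a, hr₂b, hr₃, hroots⟩ :=
    exists_isRoot_iff_of_natDegree_eq_three (natDegree_exparabolaCubic a₁ b₁ c₂)
      (by rw [(monic_exparabolaCubic a₁ b₁ c₂).leadingCoeff]; exact one_pos) hab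
      (exparabolaCubic_eval_a₁_pos hab hc) (exparabolaCubic_eval_b₁_neg hab hc)
  refine ⟨⟨r₁, r₂, r₃, by linarith, by linarith, by linarith, (hroots r₁).2 (by simp),
    (hroots r₂).2 (by simp), (hroots r₃).2 (by simp)⟩,
    r₂, ⟨hr₂a, hr₂b, (hroots r₂).2 (by simp)⟩, ?_⟩
  rintro l ⟨hal, hlb, hl⟩
  rcases (hroots l).1 hl with rfl | rfl | rfl <;> first | rfl | linarith
end
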